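/- Let z_1,…,z_N ∈ ℂ² be spinors, Z_{kl} = z_k^0 z_l^1 − z_l^0 z_k^1, and define the polynomial P = ½ Σ_{k,l} Z_{kl}(x_k y_l − x_l y_k) ∈ ℂ[x_1,…,x_N, y_1,…,y_N]. Then for every J ≥ 1 and every pair (i,j), the operator F_{ij} = ∂_{x_i}∂_{y_j} − ∂_{x_j}∂_{y_i} satisfies F_{ij}(P^J) = J(J+1) Z_{ij} P^{J−1}. -/
import Mathlib
open MvPolynomial Finset

/-- `F_{ij} = ∂_{x_i}∂_{y_j} − ∂_{x_j}∂_{y_i}` on `ℂ[x_1,…,x_N,y_1,…,y_N]`. -/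
noncomputable def Fop (N : ℕ) (i j : Fin N) :
    Module.End ℂ (MvPolynomial (Fin N ⊕ Fin N) ℂ) :=
  (pderiv (Sum.inl i)).toLinearMap.comp (pderiv (Sum.inr j)).toLinearMap -
    (pderiv (Sum.inl j)).toLinearMap.comp (pderiv (Sum.inr i)).toLinearMap

/-- `Z_{kl} = z_k⁰ z_l¹ − z_l⁰ z_k¹` for spinors `z_1,…,z_N ∈ ℂ²`. -/
def Zmat {N : ℕ} (z : Fin N → ℂ × ℂ) (k l : Fin N) : ℂ :=
  (z k).1 * (z l).2 - (z l).1 * (z k).2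

/-- The Bargmann polynomial `P = ½ Σ_{k,l} Z_{kl} (x_k y_l − x_l y_k)` representing the
unnormalized U(N) coherent intertwiner creation operator `F†_Z` applied to the vacuum. -/
noncomputable def Pz (N : ℕ) (z : Fin N → ℂ × ℂ) : MvPolynomial (Fin N ⊕ Fin N) ℂ :=
  (1 / 2 : ℂ) • ∑ k, ∑ l,
    C (Zmat z k l) * (X (Sum.inl k) * X (Sum.inr l) - X (Sum.inl l) * X (Sum.inr k))

noncomputable def PA {N : ℕ} (z : Fin N → ℂ × ℂ) : MvPolynomial (Fin N ⊕ Fin N) ℂ :=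
  ∑ k, C (z k).1 * X (Sum.inl k)
noncomputable def PB {N : ℕ} (z : Fin N → ℂ × ℂ) : MvPolynomial (Fin N ⊕ Fin N) ℂ :=
  ∑ k, C (z k).2 * X (Sum.inl k)
noncomputable def PC {N : ℕ} (z : Fin N → ℂ × ℂ) : MvPolynomial (Fin N ⊕ Fin N) ℂ :=
  ∑ k, C (z k).1 * X (Sum.inr k)
noncomputable def PD {N : ℕ} (z : Fin N → ℂ × ℂ) : MvPolynomial (Fin N ⊕ Fin N) ℂ :=
  ∑ k, C (z k).2 * X (Sum.inr k)
noncomputable def Rp {N : ℕ} (z : Fin N → ℂ × ℂ) (i : Fin N) :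
    MvPolynomial (Fin N ⊕ Fin N) ℂ := C (z i).1 * PD z - C (z i).2 * PC z
noncomputable def Qp {N : ℕ} (z : Fin N → ℂ × ℂ) (j : Fin N) :
    MvPolynomial (Fin N ⊕ Fin N) ℂ := C (z j).2 * PA z - C (z j).1 * PB z

section Aux

variable {N : ℕ} (z : Fin N → ℂ × ℂ) (i j : Fin N)

lemma dPA : pderiv (Sum.inl i) (PA z) = C (z i).1 := by
  simp [PA, pderiv_X, Pi.single_apply]
lemma dPB : pderiv (Sum.inl i) (PB z) = C (z i).2 := by
  simp [PB, pderiv_X, Pi.single_apply]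
lemma dPC : pderiv (Sum.inl i) (PC z) = 0 := by simp [PC, pderiv_X]
lemma dPD : pderiv (Sum.inl i) (PD z) = 0 := by simp [PD, pderiv_X]
lemma dPA' : pderiv (Sum.inr i) (PA z) = 0 := by simp [PA, pderiv_X]
lemma dPB' : pderiv (Sum.inr i) (PB z) = 0 := by simp [PB, pderiv_X]
lemma dPC' : pderiv (Sum.inr i) (PC z) = C (z i).1 := by
  simp [PC, pderiv_X, Pi.single_apply]
lemma dPD' : pderiv (Sum.inr i) (PD z) = C (z i).2 := by
  simp [PD, pderiv_X, Pi.single_apply]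

lemma Pz_eq : Pz N z = PA z * PD z - PB z * PC z := by
  have key : ∑ k, ∑ l, C (Zmat z k l) * (X (Sum.inl k) * X (Sum.inr l)
        - X (Sum.inl l) * X (Sum.inr k))
      = (2:ℂ) • ∑ k : Fin N, ∑ l : Fin N,
          C (Zmat z k l) * (X (Sum.inl k) * X (Sum.inr l)) := by
    have h1 : ∀ k l : Fin N, C (Zmat z k l) * (X (Sum.inl k) * X (Sum.inr l)
          - X (Sum.inl l) * X (Sum.inr k))
        = C (Zmat z k l) * (X (Sum.inl k) * X (Sum.inr l))
          + C (Zmat z l k) * (X (Sum.inl l) * X (Sum.inr k)) := by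
      intro k l
      have : Zmat z l k = - Zmat z k l := by simp only [Zmat]; ring
      rw [this]; simp only [map_neg, mul_sub, neg_mul]; ring
    simp_rw [h1, Finset.sum_add_distrib]
    rw [Finset.sum_comm (s := univ) (t := univ)
      (f := fun l k => C (Zmat z l k) * (X (Sum.inl l) * X (Sum.inr k)))]
    rw [two_smul]
  have expand : PA z * PD z - PB z * PC z
      = ∑ k : Fin N, ∑ l : Fin N, C (Zmat z k l) * (X (Sum.inl k) * X (Sum.inr l)) := by
    rw [PA, PB, PC, PD, Finset.sum_mul_sum, Finset.sum_mul_sum, ← Finset.sum_sub_distrib]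
    refine Finset.sum_congr rfl fun k _ => ?_
    rw [← Finset.sum_sub_distrib]
    refine Finset.sum_congr rfl fun l _ => ?_
    simp only [Zmat, map_sub, map_mul]
    ring
  rw [Pz, key, expand, smul_smul]
  norm_num

lemma dPz_inl : pderiv (Sum.inl i) (Pz N z) = Rp z i := by
  rw [Pz_eq, Rp]
  simp only [map_sub, pderiv_mul, dPA, dPB, dPC, dPD]
  ring

lemma dPz_inr : pderiv (Sum.inr j) (Pz N z) = Qp z j := by
  rw [Pz_eq, Qp]
  simp only [map_sub, pderiv_mul, dPA', dPB', dPC', dPD']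
  ring

lemma dQp : pderiv (Sum.inl i) (Qp z j) = C (Zmat z i j) := by
  rw [Qp, Zmat]
  simp only [map_sub, pderiv_mul, dPA, dPB, pderiv_C, map_mul]
  ring

lemma pluecker : Rp z i * Qp z j - Rp z j * Qp z i = C (Zmat z i j) * Pz N z := by
  rw [Pz_eq, Rp, Rp, Qp, Qp, Zmat]
  simp only [map_sub, map_mul]
  ring

lemma dPz_pow_inl (m : ℕ) :
    pderiv (Sum.inl i) (Pz N z ^ (m + 1)) = (m + 1) • (Pz N z ^ m * Rp z i) := by
  rw [Derivation.leibniz_pow]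
  simp [dPz_inl, smul_eq_mul]

lemma dPz_pow_inr (m : ℕ) :
    pderiv (Sum.inr j) (Pz N z ^ (m + 1)) = (m + 1) • (Pz N z ^ m * Qp z j) := by
  rw [Derivation.leibniz_pow]
  simp [dPz_inr, smul_eq_mul]

end Aux

/-- Action of the annihilation operators on powers of `P`:
`F_{ij}(P^J) = J(J+1) Z_{ij} P^{J−1}` for every `J ≥ 1`. -/
theorem Fop_pow_Pz {N : ℕ} (z : Fin N → ℂ × ℂ) (i j : Fin N) (J : ℕ) (hJ : 1 ≤ J) :
    Fop N i j (Pz N z ^ J) =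
      ((J * (J + 1) : ℕ) : ℂ) • (C (Zmat z i j) * Pz N z ^ (J - 1)) := by
  have hF : ∀ p, Fop N i j p =
      pderiv (Sum.inl i) (pderiv (Sum.inr j) p) -
        pderiv (Sum.inl j) (pderiv (Sum.inr i) p) := fun _ => rfl
  have hZ : Zmat z j i = - Zmat z i j := by simp only [Zmat]; ring
  match J, hJ with
  | 1, _ =>
    rw [hF]
    simp only [pow_one, dPz_inr, dQp, hZ, map_neg, Nat.cast_ofNat]
    rw [Nat.cast_smul_eq_nsmul]
    simp only [nsmul_eq_mul]
    push_cast
    ring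
  | (m + 2), _ =>
    rw [hF]
    rw [dPz_pow_inr z j (m + 1), dPz_pow_inr z i (m + 1)]
    rw [map_nsmul, map_nsmul]
    rw [pderiv_mul, pderiv_mul, dQp, dQp, dPz_pow_inl z i m, dPz_pow_inl z j m]
    rw [hZ, Nat.cast_smul_eq_nsmul]
    have hpl := pluecker z i j
    simp only [nsmul_eq_mul, map_neg]
    push_cast
    linear_combination (((m : MvPolynomial (Fin N ⊕ Fin N) ℂ) + 2) * ((m:MvPolynomial (Fin N ⊕ Fin N) ℂ) + 1) * Pz N z ^ m) * hpl
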